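/- arXiv:2003.06341 — 3 statements merged into one kernel-verified Lean document; each statement's English description precedes it below -/
import Mathlib

section
/- Consider the SIS model under multi-layer Markovian mobility. Let (p, x) : [0, ∞) → ℝ^{nm} × ℝ^{nm} be a solution of the coupled ODE system ṗ = (B F(x) − D − L(x)) p − diag(p) B F(x) p, ẋ^α = (Q^α)^⊤ x^α, with x(0) entrywise positive. If p(0) ∈ [0,1]^{nm}, then p(t) ∈ [0,1]^{nm} for all t ≥ 0. -/
open Matrix Finset Filter

namespace SISMobility

/-- Index type for (class, patch) pairs: `(α, i)` with `α ∈ {1,…,m}` a class and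
`i ∈ {1,…,n}` a patch. -/
abbrev Idx (n m : ℕ) := Fin m × Fin n

/-- A CTMC generator matrix: nonnegative off-diagonal entries and zero row sums
(so that the diagonal entry is minus the total outgoing rate). -/
def IsGenerator {n : ℕ} (Q : Matrix (Fin n) (Fin n) ℝ) : Prop :=
  (∀ i j, i ≠ j → 0 ≤ Q i j) ∧ ∀ i, ∑ j, Q i j = 0

/-- Strong connectivity of the digraph on `{1,…,n}` with an edge `(i,j)` whenever
`i ≠ j` and `Q i j > 0`. -/
def StronglyConnected {n : ℕ} (Q : Matrix (Fin n) (Fin n) ℝ) : Prop :=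
  ∀ i j : Fin n, Relation.ReflTransGen (fun a b => a ≠ b ∧ 0 < Q a b) i j

/-- The `nm × nm` block-diagonal infection-rate matrix `B` (m copies of `diag β`). -/
noncomputable def Bmat (n m : ℕ) (β : Fin n → ℝ) : Matrix (Idx n m) (Idx n m) ℝ :=
  Matrix.diagonal fun k => β k.2

/-- The `nm × nm` block-diagonal recovery-rate matrix `D` (m copies of `diag δ`). -/
noncomputable def Dmat (n m : ℕ) (δ : Fin n → ℝ) : Matrix (Idx n m) (Idx n m) ℝ :=
  Matrix.diagonal fun k => δ k.2

/-- The block-diagonal mobility matrix `L(x)`: the `α`-block has entries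
`l^α_{ii} = ∑_{j≠i} q^α_{ji} x^α_j / x^α_i` and `l^α_{ij} = -q^α_{ji} x^α_j / x^α_i`. -/
noncomputable def Lmat {n m : ℕ} (Q : Fin m → Matrix (Fin n) (Fin n) ℝ)
    (x : Idx n m → ℝ) : Matrix (Idx n m) (Idx n m) ℝ :=
  fun k l =>
    if k.1 = l.1 then
      if k.2 = l.2 then ∑ j ∈ Finset.univ.filter (· ≠ k.2), Q k.1 j k.2 * x (k.1, j) / x k
      else -(Q k.1 l.2 k.2 * x (k.1, l.2) / x k)
    else 0

/-- The population-fraction matrix `F(x)`: entry `((α,i),(γ,j))` equals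
`x^γ_i / ∑_η x^η_i` if `j = i` and `0` otherwise. -/
noncomputable def Fmat {n m : ℕ} (x : Idx n m → ℝ) : Matrix (Idx n m) (Idx n m) ℝ :=
  fun k l => if l.2 = k.2 then x (l.1, k.2) / ∑ η : Fin m, x (η, k.2) else 0

/-- Right-hand side of the infection dynamics
`ṗ = (B F(x) − D − L(x)) p − diag(p) B F(x) p`. -/
noncomputable def pRHS {n m : ℕ} (β δ : Fin n → ℝ) (Q : Fin m → Matrix (Fin n) (Fin n) ℝ)
    (x p : Idx n m → ℝ) : Idx n m → ℝ :=
  (Bmat n m β * Fmat x - Dmat n m δ - Lmat Q x).mulVec p -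
    (Matrix.diagonal p * (Bmat n m β * Fmat x)).mulVec p

/-- Right-hand side of the mobility dynamics `ẋ^α = (Q^α)ᵀ x^α`. -/
noncomputable def xRHS {n m : ℕ} (Q : Fin m → Matrix (Fin n) (Fin n) ℝ)
    (x : Idx n m → ℝ) : Idx n m → ℝ :=
  fun k => ∑ j, Q k.1 j k.2 * x (k.1, j)

/-- `(p, x)` is a solution of the SIS model under multi-layer Markovian mobility. -/
def IsSolution {n m : ℕ} (β δ : Fin n → ℝ) (Q : Fin m → Matrix (Fin n) (Fin n) ℝ)
    (p x : ℝ → Idx n m → ℝ) : Prop :=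
  ∀ t : ℝ, 0 ≤ t → ∀ k : Idx n m,
    HasDerivAt (fun s => p s k) (pRHS β δ Q (x t) (p t) k) t ∧
    HasDerivAt (fun s => x s k) (xRHS Q (x t) k) t

/-- The radial abscissa `μ(G)`: the largest real part of a (complex) eigenvalue of a
real matrix `G`. -/
noncomputable def muMax {ι : Type*} [Fintype ι] [DecidableEq ι] (G : Matrix ι ι ℝ) : ℝ :=
  sSup (Complex.re '' spectrum ℂ (G.map (algebraMap ℝ ℂ)))

/-- The spectral radius `ρ(G)` of a real matrix `G`. -/
noncomputable def specRad {ι : Type*} [Fintype ι] [DecidableEq ι] (G : Matrix ι ι ℝ) : ℝ :=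
  sSup ((fun z : ℂ => ‖z‖) '' spectrum ℂ (G.map (algebraMap ℝ ℂ)))

/-- The fixed-point map `H(p) = (I + A(diag p + (I − diag p) M))⁻¹ A p`. -/
noncomputable def Hfun {n m : ℕ} (A M : Matrix (Idx n m) (Idx n m) ℝ)
    (p : Idx n m → ℝ) : Idx n m → ℝ :=
  ((1 + A * (Matrix.diagonal p + (1 - Matrix.diagonal p) * M))⁻¹).mulVec (A.mulVec p)

end SISMobility

open SISMobility

/-!
All three bounds (`x ≥ 0`, `p ≥ 0`, `p ≤ 1`) come from one tangency principle for
quasi-monotone systems: if, whenever a coordinate is the smallest one and is negative, its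
derivative is at least a fixed multiple of it, then nonnegative initial data stay nonnegative
(perturb by `ε e^{(K+1)t}`; at the first time a coordinate touches zero the perturbation makes
its derivative positive). For `x` this holds because the off-diagonal rates are nonnegative.
For `p` at a negative minimum, recovery and migration push upwards and the infection term is
`≥ C β p_k` once `p` is bounded on `[0, t]`; for `1 - p` at a negative minimum (`p_k ≥ 1`
maximal, `p ≥ 0`) all three terms push downwards.
-/

open Topology

theorem HasDerivAt.eventually_nhdsGT_lt {f : ℝ → ℝ} {f' x : ℝ} (hf : HasDerivAt f f' x)
    (hf' : 0 < f') : ∀ᶠ y in 𝓝[>] x, f x < f y := by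
  have hslope : ∀ᶠ y in 𝓝[>] x, 0 < slope f x y :=
    nhdsWithin_mono _ (fun y hy => ne_of_gt hy) <|
      (hasDerivAt_iff_tendsto_slope.1 hf).eventually (eventually_gt_nhds hf')
  filter_upwards [hslope, self_mem_nhdsWithin] with y hy hxy
  rw [slope_def_field] at hy
  exact sub_pos.1 ((div_pos_iff_of_pos_right (sub_pos.2 hxy)).1 hy)

section Barrier

variable {ι : Type*} [Finite ι] {g d : ℝ → ι → ℝ} {T : ℝ}

theorem forall_nonneg_of_deriv_pos_of_eq_zero
    (hderiv : ∀ t ∈ Set.Icc 0 T, ∀ k, HasDerivAt (fun s => g s k) (d t k) t)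
    (h0 : ∀ k, 0 ≤ g 0 k)
    (hd : ∀ t ∈ Set.Icc 0 T, ∀ k, g t k = 0 → (∀ l, 0 ≤ g t l) → 0 < d t k) :
    ∀ t ∈ Set.Icc 0 T, ∀ k, 0 ≤ g t k := by
  set S := {t | ∀ k, 0 ≤ g t k}
  have hclosed : IsClosed (S ∩ Set.Icc 0 T) := by
    have hS : S ∩ Set.Icc 0 T =
        Set.Icc 0 T ∩ ⋂ k, Set.Icc 0 T ∩ (fun s => g s k) ⁻¹' Set.Ici 0 := by
      ext t; simp +contextual [S, and_comm]
    rw [hS]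
    refine isClosed_Icc.inter <| isClosed_iInter fun k =>
      ContinuousOn.preimage_isClosed_of_isClosed ?_ isClosed_Icc isClosed_Ici
    exact fun t ht => (hderiv t ht k).continuousAt.continuousWithinAt
  have hstep : ∀ t ∈ S ∩ Set.Ico 0 T, S ∈ 𝓝[>] t := by
    rintro t ⟨ht, ht0, htT⟩
    refine eventually_all.2 fun k => ?_
    have hk := hderiv t ⟨ht0, htT.le⟩ k
    rcases (ht k).lt_or_eq with hpos | hzero
    · exact (hk.continuousAt.eventually (eventually_ge_nhds hpos)).filter_mono nhdsWithin_le_nhds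
    · filter_upwards [hk.eventually_nhdsGT_lt (hd t ⟨ht0, htT.le⟩ k hzero.symm ht)] with s hs
      exact (hzero.trans_lt hs).le
  exact fun t ht => hclosed.Icc_subset_of_forall_mem_nhdsWithin h0 hstep ht

theorem forall_nonneg_of_mul_le_deriv (K : ι → ℝ)
    (hderiv : ∀ t ∈ Set.Icc 0 T, ∀ k, HasDerivAt (fun s => g s k) (d t k) t)
    (h0 : ∀ k, 0 ≤ g 0 k)
    (hd : ∀ t ∈ Set.Icc 0 T, ∀ k, g t k < 0 → (∀ l, g t k ≤ g t l) → K k * g t k ≤ d t k) :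
    ∀ t ∈ Set.Icc 0 T, ∀ k, 0 ≤ g t k := by
  obtain ⟨M, hM⟩ := (Set.finite_range K).bddAbove
  have hKM : ∀ k, K k ≤ M := fun k => hM ⟨k, rfl⟩
  have hlift : ∀ ε > 0, ∀ t ∈ Set.Icc 0 T, ∀ k, 0 ≤ g t k + ε * Real.exp ((M + 1) * t) := by
    intro ε hε
    refine forall_nonneg_of_deriv_pos_of_eq_zero
      (d := fun t k => d t k + ε * (Real.exp ((M + 1) * t) * (M + 1))) ?_ ?_ ?_
    · intro t ht k
      exact ((hderiv t ht k).add
        (((hasDerivAt_id' t).const_mul (M + 1)).exp.const_mul ε)).congr_deriv (by ring)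
    · intro k
      simpa using add_nonneg (h0 k) hε.le
    · intro t ht k hzero hnonneg
      set E := ε * Real.exp ((M + 1) * t)
      have hE : 0 < E := by positivity
      have hneg : g t k < 0 := by linarith
      have hdk := hd t ht k hneg fun l => by linarith [hnonneg l]
      have hMK : M * g t k ≤ K k * g t k := mul_le_mul_of_nonpos_right (hKM k) hneg.le
      have hrhs : d t k + E * (M + 1) = d t k - M * g t k + E := by
        rw [show g t k = -E by linarith]; ring
      simp only [E, mul_assoc] at hrhs ⊢
      linarith
  intro t ht k
  refine le_of_forall_pos_le_add fun ε hε => ?_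
  have := hlift (ε / Real.exp ((M + 1) * t)) (by positivity) t ht k
  rwa [div_mul_cancel₀ _ (Real.exp_pos _).ne'] at this

end Barrier

theorem le_sum_div_sum_mul {ι : Type*} [Fintype ι] {w v : ι → ℝ} {c : ℝ} (hw : ∀ i, 0 ≤ w i)
    (hc : c ≤ 0) (hv : ∀ i, c ≤ v i) : c ≤ ∑ i, w i / (∑ j, w j) * v i := by
  have hfrac : ∑ i, w i / (∑ j, w j) ≤ 1 := by
    rw [← Finset.sum_div]; exact div_self_le_one _
  have hfrac₀ : 0 ≤ ∑ i, w i / (∑ j, w j) :=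
    Finset.sum_nonneg fun i _ => div_nonneg (hw i) (Finset.sum_nonneg fun j _ => hw j)
  calc c ≤ (∑ i, w i / (∑ j, w j)) * c := by nlinarith
    _ = ∑ i, w i / (∑ j, w j) * c := Finset.sum_mul _ _ _
    _ ≤ _ := Finset.sum_le_sum fun i _ =>
      mul_le_mul_of_nonneg_left (hv i) (div_nonneg (hw i) (Finset.sum_nonneg fun j _ => hw j))

theorem exists_abs_le_of_hasDerivAt {ι : Type*} [Fintype ι] {g d : ℝ → ι → ℝ} {T : ℝ}
    (hderiv : ∀ t ∈ Set.Icc 0 T, ∀ k, HasDerivAt (fun s => g s k) (d t k) t) :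
    ∃ R, ∀ t ∈ Set.Icc 0 T, ∀ k, |g t k| ≤ R := by
  have hcont : ContinuousOn g (Set.Icc 0 T) := fun t ht =>
    (continuousAt_pi.2 fun k => (hderiv t ht k).continuousAt).continuousWithinAt
  obtain ⟨R, hR⟩ := isCompact_Icc.exists_bound_of_continuousOn hcont
  exact ⟨R, fun t ht k => (norm_le_pi_norm (g t) k).trans (hR t ht)⟩

namespace SISMobility

variable {n m : ℕ}

theorem Lmat_mulVec_apply (Q : Fin m → Matrix (Fin n) (Fin n) ℝ) (x p : Idx n m → ℝ)
    (k : Idx n m) :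
    (Lmat Q x *ᵥ p) k =
      ∑ j ∈ univ.filter (· ≠ k.2), Q k.1 j k.2 * x (k.1, j) / x k * (p k - p (k.1, j)) := by
  rw [mulVec, dotProduct, Fintype.sum_prod_type,
    Finset.sum_eq_single k.1 (fun γ _ hγ => sum_eq_zero fun j _ => by simp [Lmat, Ne.symm hγ])
      (by simp), ← Finset.add_sum_erase _ _ (mem_univ k.2),
    Finset.sum_congr rfl fun j hj => by
      rw [show Lmat Q x k (k.1, j) = -(Q k.1 j k.2 * x (k.1, j) / x k) by
        simp [Lmat, (ne_of_mem_erase hj).symm]]]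
  simp only [Lmat, if_true, Finset.filter_ne', Finset.sum_mul, ← Finset.sum_add_distrib]
  exact Finset.sum_congr rfl fun j _ => by ring

theorem Bmat_mul_Fmat_mulVec_apply (β : Fin n → ℝ) (x p : Idx n m → ℝ) (k : Idx n m) :
    ((Bmat n m β * Fmat x) *ᵥ p) k =
      β k.2 * ∑ γ, x (γ, k.2) / (∑ η, x (η, k.2)) * p (γ, k.2) := by
  rw [Bmat, ← mulVec_mulVec, mulVec_diagonal, mulVec, dotProduct, Fintype.sum_prod_type_right,
    Finset.sum_eq_single k.2 (fun i _ hi => sum_eq_zero fun γ _ => by simp [Fmat, hi])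
      (by simp)]
  simp [Fmat]

theorem pRHS_apply (β δ : Fin n → ℝ) (Q : Fin m → Matrix (Fin n) (Fin n) ℝ)
    (x p : Idx n m → ℝ) (k : Idx n m) :
    pRHS β δ Q x p k =
      (1 - p k) * (β k.2 * ∑ γ, x (γ, k.2) / (∑ η, x (η, k.2)) * p (γ, k.2)) - δ k.2 * p k
        - ∑ j ∈ univ.filter (· ≠ k.2), Q k.1 j k.2 * x (k.1, j) / x k * (p k - p (k.1, j)) := by
  rw [pRHS, Pi.sub_apply, sub_mulVec, sub_mulVec, Pi.sub_apply, Pi.sub_apply,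
    ← mulVec_mulVec _ (diagonal p), mulVec_diagonal, Dmat, mulVec_diagonal,
    Bmat_mul_Fmat_mulVec_apply, Lmat_mulVec_apply]
  ring

variable {β δ : Fin n → ℝ} {Q : Fin m → Matrix (Fin n) (Fin n) ℝ} {x p : Idx n m → ℝ}
  {k : Idx n m}

theorem migration_rate_nonneg (hQ : ∀ α i j, i ≠ j → 0 ≤ Q α i j) (hx : ∀ l, 0 ≤ x l) {j : Fin n}
    (hj : j ∈ univ.filter (· ≠ k.2)) : 0 ≤ Q k.1 j k.2 * x (k.1, j) / x k :=
  div_nonneg (mul_nonneg (hQ _ _ _ (mem_filter.1 hj).2) (hx _)) (hx k)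

theorem xRHS_ge_of_isMin (hQ : ∀ α i j, i ≠ j → 0 ≤ Q α i j) (hmin : ∀ j, x k ≤ x (k.1, j)) :
    (∑ j, Q k.1 j k.2) * x k ≤ xRHS Q x k := by
  have hdiff : xRHS Q x k - (∑ j, Q k.1 j k.2) * x k = ∑ j, Q k.1 j k.2 * (x (k.1, j) - x k) := by
    simp only [xRHS, mul_sub, Finset.sum_sub_distrib, Finset.sum_mul]
  have hnonneg : 0 ≤ ∑ j, Q k.1 j k.2 * (x (k.1, j) - x k) := Finset.sum_nonneg fun j _ => by
    rcases eq_or_ne j k.2 with rfl | hj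
    · simp
    · exact mul_nonneg (hQ _ _ _ hj) (sub_nonneg.2 (hmin j))
  linarith

theorem mul_le_pRHS_of_isMin (hQ : ∀ α i j, i ≠ j → 0 ≤ Q α i j) (hβ : 0 ≤ β k.2)
    (hδ : 0 ≤ δ k.2) (hx : ∀ l, 0 ≤ x l) (hneg : p k < 0) (hmin : ∀ l, p k ≤ p l) {C : ℝ}
    (hC : 1 - p k ≤ C) : C * β k.2 * p k ≤ pRHS β δ Q x p k := by
  rw [pRHS_apply]
  set A := ∑ γ, x (γ, k.2) / (∑ η, x (η, k.2)) * p (γ, k.2)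
  have hA : p k ≤ A := le_sum_div_sum_mul (fun γ => hx _) hneg.le fun γ => hmin _
  have hinfection : C * β k.2 * p k ≤ (1 - p k) * (β k.2 * A) := by
    rcases le_or_gt 0 A with hA0 | hA0
    · have : 0 ≤ (1 - p k) * (β k.2 * A) := by nlinarith [mul_nonneg hβ hA0]
      nlinarith [mul_nonneg (by linarith : (0 : ℝ) ≤ C) hβ]
    · calc C * β k.2 * p k ≤ C * β k.2 * A :=
            mul_le_mul_of_nonneg_left hA (mul_nonneg (by linarith) hβ)
        _ ≤ (1 - p k) * (β k.2 * A) := by nlinarith [mul_nonpos_of_nonneg_of_nonpos hβ hA0.le]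
  have hrecovery : δ k.2 * p k ≤ 0 := mul_nonpos_of_nonneg_of_nonpos hδ hneg.le
  have hmigration : ∑ j ∈ univ.filter (· ≠ k.2), Q k.1 j k.2 * x (k.1, j) / x k *
      (p k - p (k.1, j)) ≤ 0 := Finset.sum_nonpos fun j hj =>
    mul_nonpos_of_nonneg_of_nonpos (migration_rate_nonneg hQ hx hj) (sub_nonpos.2 (hmin _))
  linarith

theorem pRHS_nonpos_of_isMax (hQ : ∀ α i j, i ≠ j → 0 ≤ Q α i j) (hβ : 0 ≤ β k.2)
    (hδ : 0 ≤ δ k.2) (hx : ∀ l, 0 ≤ x l) (hp : ∀ l, 0 ≤ p l) (hmax : ∀ l, p l ≤ p k)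
    (hone : 1 ≤ p k) : pRHS β δ Q x p k ≤ 0 := by
  rw [pRHS_apply]
  have hA : 0 ≤ β k.2 * ∑ γ, x (γ, k.2) / (∑ η, x (η, k.2)) * p (γ, k.2) :=
    mul_nonneg hβ <| Finset.sum_nonneg fun γ _ =>
      mul_nonneg (div_nonneg (hx _) (Finset.sum_nonneg fun η _ => hx _)) (hp _)
  have hinfection := mul_nonpos_of_nonpos_of_nonneg (sub_nonpos.2 hone) hA
  have hrecovery : 0 ≤ δ k.2 * p k := mul_nonneg hδ (hp k)
  have hmigration : 0 ≤ ∑ j ∈ univ.filter (· ≠ k.2), Q k.1 j k.2 * x (k.1, j) / x k *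
      (p k - p (k.1, j)) := Finset.sum_nonneg fun j hj =>
    mul_nonneg (migration_rate_nonneg hQ hx hj) (sub_nonneg.2 (hmax _))
  linarith

end SISMobility

theorem sis_box_invariant_general
    (n m : ℕ)
    (Q : Fin m → Matrix (Fin n) (Fin n) ℝ)
    (hQgen : ∀ α, IsGenerator (Q α))
    (β δ : Fin n → ℝ) (hβ : ∀ i, 0 < β i) (hδ : ∀ i, 0 ≤ δ i)
    (p x : ℝ → Idx n m → ℝ)
    (hsol : IsSolution β δ Q p x)
    (hx0 : ∀ k, 0 < x 0 k)
    (hp0 : ∀ k, p 0 k ∈ Set.Icc (0 : ℝ) 1) :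
    ∀ t : ℝ, 0 ≤ t → ∀ k, p t k ∈ Set.Icc (0 : ℝ) 1 := by
  intro t ht k
  have hQ : ∀ α i j, i ≠ j → 0 ≤ Q α i j := fun α => (hQgen α).1
  have hpderiv : ∀ s ∈ Set.Icc 0 t, ∀ l,
      HasDerivAt (fun r => p r l) (pRHS β δ Q (x s) (p s) l) s :=
    fun s hs l => (hsol s hs.1 l).1
  have hx : ∀ s ∈ Set.Icc 0 t, ∀ l, 0 ≤ x s l :=
    forall_nonneg_of_mul_le_deriv _ (fun s hs l => (hsol s hs.1 l).2) (fun l => (hx0 l).le)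
      fun s _ l _ hmin => xRHS_ge_of_isMin hQ fun j => hmin _
  obtain ⟨R, hR⟩ := exists_abs_le_of_hasDerivAt hpderiv
  have hp_nonneg : ∀ s ∈ Set.Icc 0 t, ∀ l, 0 ≤ p s l :=
    forall_nonneg_of_mul_le_deriv (fun l => (1 + R) * β l.2) hpderiv (fun l => (hp0 l).1)
      fun s hs l hneg hmin => mul_le_pRHS_of_isMin hQ (hβ _).le (hδ _) (hx s hs) hneg hmin
        (by linarith [neg_abs_le (p s l), hR s hs l])
  have hp_le_one : ∀ s ∈ Set.Icc 0 t, ∀ l, 0 ≤ 1 - p s l :=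
    forall_nonneg_of_mul_le_deriv 0 (fun s hs l => (hpderiv s hs l).const_sub 1)
      (fun l => sub_nonneg.2 (hp0 l).2)
      fun s hs l hneg hmax => by
        simpa using pRHS_nonpos_of_isMax hQ (hβ _).le (hδ _) (hx s hs) (hp_nonneg s hs)
          (fun l' => by linarith [hmax l']) (by linarith)
  exact ⟨hp_nonneg t ⟨ht, le_rfl⟩ k, sub_nonneg.1 (hp_le_one t ⟨ht, le_rfl⟩ k)⟩

/-- Theorem 2 (i), first part: for the SIS model under multi-layer
Markovian mobility, if `x(0) ≫ 0` and `p(0) ∈ [0,1]^{nm}`, then `p(t) ∈ [0,1]^{nm}`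
for all `t ≥ 0`. -/
theorem sis_box_invariant
    (n m : ℕ) (hn : 2 ≤ n) (hm : 1 ≤ m)
    (Q : Fin m → Matrix (Fin n) (Fin n) ℝ)
    (hQgen : ∀ α, IsGenerator (Q α)) (hQirr : ∀ α, StronglyConnected (Q α))
    (β δ : Fin n → ℝ) (hβ : ∀ i, 0 < β i) (hδ : ∀ i, 0 ≤ δ i)
    (p x : ℝ → Idx n m → ℝ)
    (hsol : IsSolution β δ Q p x)
    (hx0 : ∀ k, 0 < x 0 k)
    (hp0 : ∀ k, p 0 k ∈ Set.Icc (0 : ℝ) 1) :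
    ∀ t : ℝ, 0 ≤ t → ∀ k, p t k ∈ Set.Icc (0 : ℝ) 1 :=
  sis_box_invariant_general n m Q hQgen β δ hβ hδ p x hsol hx0 hp0
end

section
/- Consider the SIS model under multi-layer Markovian mobility. Let (p, x) : [0, ∞) → ℝ^{nm} × ℝ^{nm} be a solution of the coupled ODE system ṗ = (B F(x) − D − L(x)) p − diag(p) B F(x) p, ẋ^α = (Q^α)^⊤ x^α, with x(0) entrywise positive and p(0) ∈ [0,1]^{nm}. If p(0) > 0 (entrywise nonnegative and not identically zero), then p(t) ≫ 0 (all entries strictly positive) for all t > 0. -/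
open Matrix Finset Filter

open SISMobility

/-!
Along a solution, `p` solves the linear time-varying system `ṗ = A(t) p` with
`A(t) = B F(x) − D − L(x) − diag(B F(x) p)`, whose off-diagonal entries are nonnegative (a
Metzler matrix); so does `x`, with the constant matrix `diag((Q^α)ᵀ)`. For such systems
nonnegativity is invariant (perturb by `ε e^{ct}` and look at a first zero), and `e^{Ct} u_k` is
nondecreasing, strictly increasing while some `u_l` with `A_{kl} > 0` is positive. Hence
positivity persists and propagates along the edges `l → k` with `A_{kl} > 0`. Irreducibility of
each `Q^α` moves it between patches within a class, and `β > 0` between classes within a patch,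
so it reaches every coordinate from any initially infected one.
-/

open Set Topology

namespace Matrix

variable {ι : Type*} [Fintype ι]

def IsMetzler (M : Matrix ι ι ℝ) : Prop :=
  ∀ k l, k ≠ l → 0 ≤ M k l

variable {M : Matrix ι ι ℝ} {w : ι → ℝ} {k : ι} {C e : ℝ}

theorem IsMetzler.neg_mul_le_mulVec_apply (hM : M.IsMetzler) (hC : ∀ l, |M k l| ≤ C)
    (he : 0 ≤ e) (hw : ∀ l, -e ≤ w l) (hwk : w k = -e) :
    -(Fintype.card ι * C * e) ≤ (M *ᵥ w) k := by
  have hterm : ∀ l, -(C * e) ≤ M k l * w l := by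
    intro l
    have hMe : M k l * -e ≤ M k l * w l := by
      rcases eq_or_ne k l with rfl | hkl
      · rw [hwk]
      · exact mul_le_mul_of_nonneg_left (hw l) (hM k l hkl)
    nlinarith [le_abs_self (M k l), hC l]
  calc -(Fintype.card ι * C * e) = ∑ _l : ι, -(C * e) := by simp; ring
    _ ≤ ∑ l, M k l * w l := sum_le_sum fun l _ => hterm l

theorem IsMetzler.mulVec_apply_add_nonneg (hM : M.IsMetzler) (hw : 0 ≤ w)
    (hC : -C ≤ M k k) : 0 ≤ (M *ᵥ w) k + C * w k := by
  classical
  have hsplit := add_sum_erase univ (fun j => M k j * w j) (mem_univ k)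
  have hoff : 0 ≤ ∑ j ∈ univ.erase k, M k j * w j :=
    sum_nonneg fun j hj => mul_nonneg (hM k j (ne_of_mem_erase hj).symm) (hw j)
  have hdiag : 0 ≤ (M k k + C) * w k := mul_nonneg (by linarith) (hw k)
  simp only [mulVec, dotProduct] at hsplit ⊢
  linarith

theorem IsMetzler.mul_le_mulVec_apply_add (hM : M.IsMetzler) (hw : 0 ≤ w)
    (hC : -C ≤ M k k) {l : ι} (hl : l ≠ k) :
    M k l * w l ≤ (M *ᵥ w) k + C * w k := by
  classical
  have hsplit := add_sum_erase univ (fun j => M k j * w j) (mem_univ k)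
  have hle : M k l * w l ≤ ∑ j ∈ univ.erase k, M k j * w j :=
    single_le_sum (fun j hj => mul_nonneg (hM k j (ne_of_mem_erase hj).symm) (hw j))
      (mem_erase.2 ⟨hl, mem_univ l⟩)
  have hdiag : 0 ≤ (M k k + C) * w k := mul_nonneg (by linarith) (hw k)
  simp only [mulVec, dotProduct] at hsplit ⊢
  linarith

end Matrix

theorem eventually_pos_nhdsGT_of_hasDerivAt {f : ℝ → ℝ} {f' x : ℝ} (hf : HasDerivAt f f' x)
    (hf' : 0 < f') (hx : f x = 0) : ∀ᶠ y in 𝓝[>] x, 0 < f y := by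
  filter_upwards [(hasDerivAt_iff_tendsto_slope_left_right.1 hf).2.eventually
    (eventually_gt_nhds hf'), self_mem_nhdsWithin] with y hslope hy
  exact pos_of_slope_pos hy hslope hx

section MetzlerSystem

variable {ι : Type*} [Fintype ι]

structure IsMetzlerSolution (A : ℝ → Matrix ι ι ℝ) (u : ℝ → ι → ℝ) : Prop where
  isMetzler : ∀ t, 0 ≤ t → (A t).IsMetzler
  continuousOn : ∀ k l, ContinuousOn (fun t => A t k l) (Ici 0)
  hasDerivAt : ∀ t, 0 ≤ t → ∀ k, HasDerivAt (fun s => u s k) ((A t *ᵥ u t) k) t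

namespace IsMetzlerSolution

variable {A : ℝ → Matrix ι ι ℝ} {u : ℝ → ι → ℝ}

theorem exists_abs_le (h : IsMetzlerSolution A u) (τ : ℝ) :
    ∃ C, ∀ t ∈ Icc 0 τ, ∀ k l, |A t k l| ≤ C := by
  have hc : ContinuousOn (fun t k l => A t k l : ℝ → ι → ι → ℝ) (Icc 0 τ) :=
    continuousOn_pi.2 fun k => continuousOn_pi.2 fun l =>
      (h.continuousOn k l).mono Icc_subset_Ici_self
  obtain ⟨C, hC⟩ := isCompact_Icc.exists_bound_of_continuousOn hc
  refine ⟨C, fun t ht k l => ?_⟩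
  calc |A t k l| ≤ ‖fun l => A t k l‖ := norm_le_pi_norm (fun l => A t k l) l
    _ ≤ ‖fun k l => A t k l‖ := norm_le_pi_norm (fun k l => A t k l) k
    _ ≤ C := hC t ht

/-- The rate `|ι| C + 1` makes every coordinate of `u + ε e^{ct}` strictly increasing at its
zeros, so that none of them ever becomes negative. -/
theorem neg_mul_exp_le_apply (h : IsMetzlerSolution A u) (hu0 : 0 ≤ u 0) {τ C ε : ℝ}
    (hC : ∀ t ∈ Icc 0 τ, ∀ k l, |A t k l| ≤ C) (hε : 0 < ε) :
    ∀ t ∈ Icc 0 τ, ∀ k, -(ε * Real.exp ((Fintype.card ι * C + 1) * t)) ≤ u t k := by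
  set c : ℝ := Fintype.card ι * C + 1
  set v : ℝ → ι → ℝ := fun t k => u t k + ε * Real.exp (c * t) with hv_def
  have hv : ∀ t, 0 ≤ t → ∀ k,
      HasDerivAt (fun s => v s k) ((A t *ᵥ u t) k + ε * Real.exp (c * t) * c) t := by
    intro t ht k
    have hexp := (((hasDerivAt_id t).const_mul c).exp).const_mul ε
    exact ((h.hasDerivAt t ht k).add hexp).congr_deriv (by simp only [id]; ring)
  suffices hsub : Icc 0 τ ⊆ {t | 0 ≤ v t} by
    intro t ht k
    have := hsub ht k
    simp only [hv_def, Pi.zero_apply] at this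
    linarith
  have hvc : ContinuousOn v (Icc 0 τ) := fun t ht =>
    (continuousAt_pi.2 fun k => (hv t ht.1 k).continuousAt).continuousWithinAt
  refine IsClosed.Icc_subset_of_forall_mem_nhdsWithin ?_ ?_ ?_
  · rw [Set.inter_comm]
    exact hvc.preimage_isClosed_of_isClosed isClosed_Icc isClosed_Ici
  · intro k
    simpa [hv_def] using add_nonneg (hu0 k) hε.le
  · rintro t ⟨hvt, ht⟩
    replace hvt : ∀ l, 0 ≤ u t l + ε * Real.exp (c * t) := hvt
    have hk : ∀ k, ∀ᶠ s in 𝓝[>] t, 0 < v s k := by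
      intro k
      rcases (hvt k).lt_or_eq with hpos | hzero
      · exact nhdsWithin_le_nhds
          ((hv t ht.1 k).continuousAt.eventually (eventually_gt_nhds hpos))
      · refine eventually_pos_nhdsGT_of_hasDerivAt (hv t ht.1 k) ?_ hzero.symm
        set e := ε * Real.exp (c * t)
        have he : 0 < e := mul_pos hε (Real.exp_pos _)
        have hbound := (h.isMetzler t ht.1).neg_mul_le_mulVec_apply (w := u t)
          (hC t ⟨ht.1, ht.2.le⟩ k) he.le (fun l => by linarith [hvt l]) (by linarith)
        nlinarith
    filter_upwards [eventually_all.2 hk] with s hs using fun k => (hs k).le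

theorem nonneg (h : IsMetzlerSolution A u) (hu0 : 0 ≤ u 0) {t : ℝ} (ht : 0 ≤ t) : 0 ≤ u t := by
  obtain ⟨C, hC⟩ := h.exists_abs_le t
  intro k
  refine le_of_forall_pos_le_add fun δ hδ => ?_
  have hE := Real.exp_pos ((Fintype.card ι * C + 1) * t)
  have := h.neg_mul_exp_le_apply hu0 hC (div_pos hδ hE) t ⟨ht, le_rfl⟩ k
  rw [div_mul_cancel₀ _ hE.ne'] at this
  simpa using (by linarith : 0 ≤ u t k + δ)

theorem hasDerivAt_exp_mul_apply (h : IsMetzlerSolution A u) (C : ℝ) {t : ℝ} (ht : 0 ≤ t)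
    (k : ι) : HasDerivAt (fun s => Real.exp (C * s) * u s k)
      (Real.exp (C * t) * ((A t *ᵥ u t) k + C * u t k)) t :=
  (((hasDerivAt_id t).const_mul C).exp.mul (h.hasDerivAt t ht k)).congr_deriv
    (by simp only [id]; ring)

theorem monotoneOn_exp_mul_apply (h : IsMetzlerSolution A u) (hu0 : 0 ≤ u 0) {τ C : ℝ} {k : ι}
    (hC : ∀ t ∈ Icc 0 τ, -C ≤ A t k k) :
    MonotoneOn (fun s => Real.exp (C * s) * u s k) (Icc 0 τ) := by
  refine monotoneOn_of_hasDerivWithinAt_nonneg (convex_Icc 0 τ)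
    (fun t ht => (h.hasDerivAt_exp_mul_apply C ht.1 k).continuousAt.continuousWithinAt)
    (fun t ht => (h.hasDerivAt_exp_mul_apply C (interior_subset ht).1 k).hasDerivWithinAt)
    fun t ht => ?_
  have ht' := interior_subset ht
  exact mul_nonneg (Real.exp_pos _).le
    ((h.isMetzler t ht'.1).mulVec_apply_add_nonneg (h.nonneg hu0 ht'.1) (hC t ht'))

theorem strictMonoOn_exp_mul_apply (h : IsMetzlerSolution A u) (hu0 : 0 ≤ u 0) {τ C : ℝ}
    {k l : ι} (hl : l ≠ k) (hC : ∀ t ∈ Icc 0 τ, -C ≤ A t k k)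
    (hpos : ∀ t ∈ Ioo 0 τ, 0 < A t k l * u t l) :
    StrictMonoOn (fun s => Real.exp (C * s) * u s k) (Icc 0 τ) := by
  refine strictMonoOn_of_deriv_pos (convex_Icc 0 τ)
    (fun t ht => (h.hasDerivAt_exp_mul_apply C ht.1 k).continuousAt.continuousWithinAt)
    fun t ht => ?_
  rw [interior_Icc] at ht
  rw [(h.hasDerivAt_exp_mul_apply C ht.1.le k).deriv]
  exact mul_pos (Real.exp_pos _) ((hpos t ht).trans_le <|
    (h.isMetzler t ht.1.le).mul_le_mulVec_apply_add (h.nonneg hu0 ht.1.le)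
      (hC t (Ioo_subset_Icc_self ht)) hl)

theorem pos_of_pos_of_le (h : IsMetzlerSolution A u) (hu0 : 0 ≤ u 0) {a b : ℝ} {k : ι}
    (ha : 0 ≤ a) (hab : a ≤ b) (hpos : 0 < u a k) : 0 < u b k := by
  obtain ⟨C, hC⟩ := h.exists_abs_le b
  have hmono := h.monotoneOn_exp_mul_apply hu0 fun t ht => neg_le_of_abs_le (hC t ht k k)
  have hle := hmono ⟨ha, hab⟩ ⟨ha.trans hab, le_rfl⟩ hab
  exact pos_of_mul_pos_right ((mul_pos (Real.exp_pos _) hpos).trans_le hle) (Real.exp_pos _).le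

theorem pos_of_influence (h : IsMetzlerSolution A u) (hu0 : 0 ≤ u 0) {k l : ι} (hl : l ≠ k)
    (hA : ∀ t, 0 < t → 0 < A t k l) (hul : ∀ t, 0 < t → 0 < u t l) {t : ℝ} (ht : 0 < t) :
    0 < u t k := by
  obtain ⟨C, hC⟩ := h.exists_abs_le t
  have hmono := h.strictMonoOn_exp_mul_apply hu0 hl (fun s hs => neg_le_of_abs_le (hC s hs k k))
    fun s hs => mul_pos (hA s hs.1) (hul s hs.1)
  have hlt := hmono ⟨le_rfl, ht.le⟩ ⟨ht.le, le_rfl⟩ ht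
  simp only [mul_zero, Real.exp_zero, one_mul] at hlt
  exact pos_of_mul_pos_right ((hu0 k).trans_lt hlt) (Real.exp_pos _).le

theorem pos_of_reflTransGen (h : IsMetzlerSolution A u) (hu0 : 0 ≤ u 0) {k₀ k : ι}
    (hk₀ : 0 < u 0 k₀)
    (hreach : Relation.ReflTransGen (fun a b => a ≠ b ∧ ∀ t, 0 < t → 0 < A t b a) k₀ k)
    {t : ℝ} (ht : 0 < t) : 0 < u t k := by
  induction hreach generalizing t with
  | refl => exact h.pos_of_pos_of_le hu0 le_rfl ht.le hk₀
  | tail _ hab ih => exact h.pos_of_influence hu0 hab.1 hab.2 (fun s hs => ih hs) ht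

end IsMetzlerSolution

end MetzlerSystem

namespace SISMobility

variable {n m : ℕ} {Q : Fin m → Matrix (Fin n) (Fin n) ℝ} {β δ : Fin n → ℝ}

/-- The block-diagonal matrix with blocks `(Q^α)ᵀ`. -/
def mobilityMatrix (Q : Fin m → Matrix (Fin n) (Fin n) ℝ) : Matrix (Idx n m) (Idx n m) ℝ :=
  fun k l => if k.1 = l.1 then Q k.1 l.2 k.2 else 0

theorem xRHS_eq_mulVec (x : Idx n m → ℝ) : xRHS Q x = mobilityMatrix Q *ᵥ x := by
  ext k
  simp [xRHS, mobilityMatrix, mulVec, dotProduct, Fintype.sum_prod_type, ite_mul]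

theorem isMetzler_mobilityMatrix (hQ : ∀ α, IsGenerator (Q α)) :
    (mobilityMatrix Q).IsMetzler := by
  rintro k l hkl
  unfold mobilityMatrix
  split_ifs with hcl
  · exact (hQ k.1).1 _ _ fun h => hkl (Prod.ext hcl h.symm)
  · exact le_rfl

theorem isMetzlerSolution_mobility {p x : ℝ → Idx n m → ℝ} (hQ : ∀ α, IsGenerator (Q α))
    (hsol : IsSolution β δ Q p x) : IsMetzlerSolution (fun _ => mobilityMatrix Q) x where
  isMetzler _ _ := isMetzler_mobilityMatrix hQ
  continuousOn _ _ := continuousOn_const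
  hasDerivAt t ht k := by simpa only [xRHS_eq_mulVec] using (hsol t ht k).2

noncomputable def sisMatrix (β δ : Fin n → ℝ) (Q : Fin m → Matrix (Fin n) (Fin n) ℝ)
    (x p : Idx n m → ℝ) : Matrix (Idx n m) (Idx n m) ℝ :=
  Bmat n m β * Fmat x - Dmat n m δ - Lmat Q x - diagonal ((Bmat n m β * Fmat x) *ᵥ p)

theorem pRHS_eq_mulVec (x p : Idx n m → ℝ) :
    pRHS β δ Q x p = sisMatrix β δ Q x p *ᵥ p := by
  ext k
  simp [pRHS, sisMatrix, sub_mulVec, ← mulVec_mulVec, mulVec_diagonal, mul_comm]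

theorem Bmat_mul_Fmat_apply (x : Idx n m → ℝ) (k l : Idx n m) :
    (Bmat n m β * Fmat x) k l =
      if l.2 = k.2 then β k.2 * (x (l.1, k.2) / ∑ η, x (η, k.2)) else 0 := by
  simp [Bmat, Fmat, diagonal_mul, mul_ite]

theorem sisMatrix_apply_of_ne {x p : Idx n m → ℝ} {k l : Idx n m} (hkl : k ≠ l) :
    sisMatrix β δ Q x p k l = (Bmat n m β * Fmat x) k l - Lmat Q x k l := by
  simp [sisMatrix, Dmat, diagonal_apply_ne _ hkl]

theorem isMetzler_sisMatrix (hQ : ∀ α, IsGenerator (Q α)) (hβ : ∀ i, 0 ≤ β i)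
    {x : Idx n m → ℝ} (hx : 0 ≤ x) (p : Idx n m → ℝ) : (sisMatrix β δ Q x p).IsMetzler := by
  intro k l hkl
  have hBF : 0 ≤ (Bmat n m β * Fmat x) k l := by
    rw [Bmat_mul_Fmat_apply]
    split_ifs
    · exact mul_nonneg (hβ _) (div_nonneg (hx _) (sum_nonneg fun η _ => hx _))
    · exact le_rfl
  have hL : Lmat Q x k l ≤ 0 := by
    unfold Lmat
    split_ifs with hcl hpl
    · exact absurd (Prod.ext hcl hpl) hkl
    · exact neg_nonpos.2 (div_nonneg (mul_nonneg ((hQ k.1).1 _ _ fun h => hpl h.symm) (hx _))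
        (hx k))
    · exact le_rfl
  rw [sisMatrix_apply_of_ne hkl]
  linarith

theorem sisMatrix_pos_of_move {x : Idx n m → ℝ} (hx : ∀ k, 0 < x k) (p : Idx n m → ℝ)
    {α : Fin m} {i j : Fin n} (hij : i ≠ j) (hq : 0 < Q α i j) :
    0 < sisMatrix β δ Q x p (α, j) (α, i) := by
  rw [sisMatrix_apply_of_ne (by simpa using hij.symm), Bmat_mul_Fmat_apply, if_neg hij]
  simpa [Lmat, hij.symm] using div_pos (mul_pos hq (hx _)) (hx _)

theorem sisMatrix_pos_of_switch {x : Idx n m → ℝ} (hx : ∀ k, 0 < x k) (p : Idx n m → ℝ)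
    {α γ : Fin m} (hαγ : α ≠ γ) {i : Fin n} (hβ : 0 < β i) :
    0 < sisMatrix β δ Q x p (γ, i) (α, i) := by
  rw [sisMatrix_apply_of_ne (by simpa using hαγ.symm), Bmat_mul_Fmat_apply, if_pos rfl]
  simpa [Lmat, hαγ.symm] using
    mul_pos hβ (div_pos (hx _) (sum_pos (fun η _ => hx (η, i)) ⟨α, mem_univ α⟩))

theorem continuousAt_sisMatrix_apply {x p : ℝ → Idx n m → ℝ} {t : ℝ} (hxc : ContinuousAt x t)
    (hpc : ContinuousAt p t) (hx : ∀ k, 0 < x t k) (k l : Idx n m) :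
    ContinuousAt (fun s => sisMatrix β δ Q (x s) (p s) k l) t := by
  have hxk : ∀ k, ContinuousAt (fun s => x s k) t := continuousAt_pi.1 hxc
  have hBF : ∀ k l, ContinuousAt (fun s => (Bmat n m β * Fmat (x s)) k l) t := by
    intro k l
    simp only [Bmat_mul_Fmat_apply]
    have hS : ∑ η, x t (η, k.2) ≠ 0 :=
      (sum_pos (fun η _ => hx (η, k.2)) ⟨l.1, mem_univ _⟩).ne'
    split_ifs
    · fun_prop (disch := exact hS)
    · fun_prop
  have hL : ∀ k l, ContinuousAt (fun s => Lmat Q (x s) k l) t := by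
    intro k l
    unfold Lmat
    split_ifs
    · fun_prop (disch := exact (hx k).ne')
    · fun_prop (disch := exact (hx k).ne')
    · fun_prop
  have hpk : ∀ k, ContinuousAt (fun s => p s k) t := continuousAt_pi.1 hpc
  simp only [sisMatrix, Matrix.sub_apply, diagonal_apply, Dmat, mulVec, dotProduct]
  split_ifs
  · fun_prop
  · fun_prop

theorem isMetzlerSolution_infection {p x : ℝ → Idx n m → ℝ} (hQ : ∀ α, IsGenerator (Q α))
    (hβ : ∀ i, 0 ≤ β i) (hsol : IsSolution β δ Q p x) (hx : ∀ t, 0 ≤ t → ∀ k, 0 < x t k) :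
    IsMetzlerSolution (fun t => sisMatrix β δ Q (x t) (p t)) p where
  isMetzler t ht := isMetzler_sisMatrix hQ hβ (fun k => (hx t ht k).le) (p t)
  continuousOn k l t ht :=
    (continuousAt_sisMatrix_apply (continuousAt_pi.2 fun k => (hsol t ht k).2.continuousAt)
      (continuousAt_pi.2 fun k => (hsol t ht k).1.continuousAt) (hx t ht) k l).continuousWithinAt
  hasDerivAt t ht k := by simpa only [pRHS_eq_mulVec] using (hsol t ht k).1

theorem reflTransGen_of_stronglyConnected {r : Idx n m → Idx n m → Prop}
    (hQ : ∀ α, StronglyConnected (Q α))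
    (hmove : ∀ α i j, i ≠ j → 0 < Q α i j → r (α, i) (α, j))
    (hswitch : ∀ α γ i, α ≠ γ → r (α, i) (γ, i)) (k₀ k : Idx n m) :
    Relation.ReflTransGen r k₀ k := by
  have hwalk : Relation.ReflTransGen r k₀ (k₀.1, k.2) :=
    Relation.ReflTransGen.lift (fun j => (k₀.1, j))
      (fun i j hij => hmove k₀.1 i j hij.1 hij.2) _ _ (hQ k₀.1 k₀.2 k.2)
  by_cases hcl : k₀.1 = k.1
  · rwa [hcl] at hwalk
  · exact hwalk.tail (hswitch _ _ _ hcl)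

end SISMobility

theorem sis_eventually_positive_general
    (n m : ℕ)
    (Q : Fin m → Matrix (Fin n) (Fin n) ℝ)
    (hQgen : ∀ α, IsGenerator (Q α)) (hQirr : ∀ α, StronglyConnected (Q α))
    (β δ : Fin n → ℝ) (hβ : ∀ i, 0 < β i)
    (p x : ℝ → Idx n m → ℝ)
    (hsol : IsSolution β δ Q p x)
    (hx0 : ∀ k, 0 < x 0 k)
    (hp0 : ∀ k, p 0 k ∈ Set.Icc (0 : ℝ) 1)
    (hp0ne : p 0 ≠ 0) :
    ∀ t : ℝ, 0 < t → ∀ k, 0 < p t k := by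
  have hx : ∀ t, 0 ≤ t → ∀ k, 0 < x t k := fun t ht k =>
    (isMetzlerSolution_mobility hQgen hsol).pos_of_pos_of_le (fun k => (hx0 k).le) le_rfl ht
      (hx0 k)
  have hpsol := isMetzlerSolution_infection hQgen (fun i => (hβ i).le) hsol hx
  have hp0nonneg : 0 ≤ p 0 := fun k => (hp0 k).1
  obtain ⟨k₀, hk₀⟩ : ∃ k₀, 0 < p 0 k₀ := by
    obtain ⟨k₀, hne⟩ := Function.ne_iff.1 hp0ne
    exact ⟨k₀, (hp0nonneg k₀).lt_of_ne' hne⟩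
  intro t ht k
  refine hpsol.pos_of_reflTransGen hp0nonneg hk₀ ?_ ht
  refine reflTransGen_of_stronglyConnected hQirr (fun α i j hij hq => ⟨?_, fun s hs => ?_⟩)
    (fun α γ i hαγ => ⟨?_, fun s hs => ?_⟩) k₀ k
  · simpa using hij
  · exact sisMatrix_pos_of_move (hx s hs.le) (p s) hij hq
  · simpa using hαγ
  · exact sisMatrix_pos_of_switch (hx s hs.le) (p s) hαγ (hβ i)

/-- Theorem 2 (i), second part: for the SIS model under multi-layer
Markovian mobility, if `x(0) ≫ 0`, `p(0) ∈ [0,1]^{nm}` and `p(0) > 0` (entrywise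
nonnegative and not identically zero), then `p(t) ≫ 0` for all `t > 0`. -/
theorem sis_eventually_positive
    (n m : ℕ) (hn : 2 ≤ n) (hm : 1 ≤ m)
    (Q : Fin m → Matrix (Fin n) (Fin n) ℝ)
    (hQgen : ∀ α, IsGenerator (Q α)) (hQirr : ∀ α, StronglyConnected (Q α))
    (β δ : Fin n → ℝ) (hβ : ∀ i, 0 < β i) (hδ : ∀ i, 0 ≤ δ i)
    (p x : ℝ → Idx n m → ℝ)
    (hsol : IsSolution β δ Q p x)
    (hx0 : ∀ k, 0 < x 0 k)
    (hp0 : ∀ k, p 0 k ∈ Set.Icc (0 : ℝ) 1)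
    (hp0ne : p 0 ≠ 0) :
    ∀ t : ℝ, 0 < t → ∀ k, 0 < p t k :=
  sis_eventually_positive_general n m Q hQgen hQirr β δ hβ p x hsol hx0 hp0 hp0ne
end

section
/- Consider the SIS model under multi-layer Markovian mobility, with F* = F(v) and L* = L(v). If δ_i ≥ β_i for every patch i ∈ {1,…,n}, then μ(B F* − D − L*) ≤ 0, where μ(G) is the largest real part of an eigenvalue of G. -/
/-!
The matrix `G = B F* − D − L*` is Metzler: `B F*` is nonnegative, `D` is diagonal and
`L*` has nonpositive off-diagonal entries. Its row sums are `β_i − δ_i ≤ 0`, because every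
row of `F*` sums to one and every row of `L*` sums to zero. By Gershgorin's theorem every
eigenvalue `z` lies in a disc centred at some `G_kk` of radius `∑_{j≠k} G_kj ≤ −G_kk`,
so `Re z ≤ 0`.
-/

open Matrix Finset Filter

namespace SISMobility

theorem muMax_nonpos_of_offDiag_nonneg_of_sum_row_nonpos {ι : Type*} [Fintype ι]
    [DecidableEq ι] (G : Matrix ι ι ℝ) (hoff : ∀ k l, k ≠ l → 0 ≤ G k l)
    (hrow : ∀ k, ∑ l, G k l ≤ 0) : muMax G ≤ 0 := by
  refine Real.sSup_le ?_ le_rfl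
  rintro _ ⟨z, hz, rfl⟩
  rw [← spectrum_toLin', ← Module.End.hasEigenvalue_iff_mem_spectrum] at hz
  obtain ⟨k, hk⟩ := eigenvalue_mem_ball hz
  rw [mem_closedBall_iff_norm] at hk
  have hradius : ∑ l ∈ univ.erase k, ‖G.map (algebraMap ℝ ℂ) k l‖ = ∑ l, G k l - G k k := by
    rw [← sum_erase_eq_sub (mem_univ k)]
    refine sum_congr rfl fun l hl => ?_
    simp [Complex.norm_real, abs_of_nonneg (hoff k l (ne_of_mem_erase hl).symm)]
  have hre : z.re - G k k ≤ ‖z - G.map (algebraMap ℝ ℂ) k k‖ := by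
    simpa using Complex.re_le_norm (z - G.map (algebraMap ℝ ℂ) k k)
  linarith [hrow k]

theorem Bmat_mul_apply {n m : ℕ} (β : Fin n → ℝ) (M : Matrix (Idx n m) (Idx n m) ℝ)
    (k l : Idx n m) : (Bmat n m β * M) k l = β k.2 * M k l :=
  diagonal_mul _ _ _ _

theorem sum_Dmat_row {n m : ℕ} (δ : Fin n → ℝ) (k : Idx n m) :
    ∑ l, Dmat n m δ k l = δ k.2 := by
  simp [Dmat, diagonal_apply]

theorem Fmat_nonneg {n m : ℕ} {x : Idx n m → ℝ} (hx : ∀ k, 0 ≤ x k) (k l : Idx n m) :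
    0 ≤ Fmat x k l := by
  unfold Fmat
  split_ifs
  · exact div_nonneg (hx _) (sum_nonneg fun η _ => hx _)
  · exact le_rfl

theorem sum_Fmat_row {n m : ℕ} {x : Idx n m → ℝ} (hx : ∀ k, 0 < x k) (k : Idx n m) :
    ∑ l, Fmat x k l = 1 := by
  have hpos : 0 < ∑ η : Fin m, x (η, k.2) := sum_pos (fun η _ => hx _) ⟨k.1, mem_univ _⟩
  rw [Fintype.sum_prod_type, ← div_self hpos.ne', sum_div]
  refine sum_congr rfl fun γ _ => ?_
  simp [Fmat]

theorem Lmat_nonpos_of_ne {n m : ℕ} {Q : Fin m → Matrix (Fin n) (Fin n) ℝ}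
    (hQ : ∀ α i j, i ≠ j → 0 ≤ Q α i j) {x : Idx n m → ℝ} (hx : ∀ k, 0 ≤ x k)
    {k l : Idx n m} (hkl : k ≠ l) : Lmat Q x k l ≤ 0 := by
  unfold Lmat
  split_ifs with h1 h2
  · exact absurd (Prod.ext h1 h2) hkl
  · exact neg_nonpos.mpr (div_nonneg (mul_nonneg (hQ _ _ _ (Ne.symm h2)) (hx _)) (hx _))
  · exact le_rfl

theorem sum_Lmat_row {n m : ℕ} (Q : Fin m → Matrix (Fin n) (Fin n) ℝ) (x : Idx n m → ℝ)
    (k : Idx n m) : ∑ l, Lmat Q x k l = 0 := by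
  rw [Fintype.sum_prod_type, sum_eq_single k.1 (fun γ _ hγ => by simp [Lmat, Ne.symm hγ])
    (by simp), ← add_sum_erase _ _ (mem_univ k.2), ← filter_ne']
  have hdiag : Lmat Q x k (k.1, k.2)
      = ∑ j ∈ univ.filter (· ≠ k.2), Q k.1 j k.2 * x (k.1, j) / x k := by
    simp [Lmat]
  rw [hdiag, ← sum_add_distrib]
  exact sum_eq_zero fun j hj => by simp [Lmat, Ne.symm (mem_filter.mp hj).2]

end SISMobility

open SISMobility

theorem sufficient_condition_all_patches_general
    (n m : ℕ)
    (Q : Fin m → Matrix (Fin n) (Fin n) ℝ)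
    (hQgen : ∀ α, IsGenerator (Q α))
    (β δ : Fin n → ℝ) (hβ : ∀ i, 0 < β i)
    (vα : Fin m → Fin n → ℝ) (hvαpos : ∀ α i, 0 < vα α i)
    (Npop : Fin m → ℝ) (hNpop : ∀ α, 0 < Npop α)
    (v : Idx n m → ℝ) (hv : ∀ k, v k = Npop k.1 * vα k.1 k.2)
    (hrates : ∀ i : Fin n, β i ≤ δ i) :
    muMax (Bmat n m β * Fmat v - Dmat n m δ - Lmat Q v) ≤ 0 := by
  have hvpos : ∀ k, 0 < v k := fun k => (hv k).symm ▸ mul_pos (hNpop k.1) (hvαpos k.1 k.2)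
  refine muMax_nonpos_of_offDiag_nonneg_of_sum_row_nonpos _ (fun k l hkl => ?_) fun k => ?_
  · have hBF := mul_nonneg (hβ k.2).le (Fmat_nonneg (fun k => (hvpos k).le) k l)
    have hL := Lmat_nonpos_of_ne (fun α => (hQgen α).1) (fun k => (hvpos k).le) hkl
    rw [Matrix.sub_apply, Matrix.sub_apply, Bmat_mul_apply, Dmat, diagonal_apply_ne _ hkl]
    linarith
  · simp only [Matrix.sub_apply, Bmat_mul_apply, sum_sub_distrib, ← mul_sum, sum_Fmat_row hvpos,
      sum_Dmat_row, sum_Lmat_row]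
    linarith [hrates k.2]

/-- Corollary 1 (iii): if `δ_i ≥ β_i` for every patch `i`, then
`μ(B F* − D − L*) ≤ 0`. -/
theorem sufficient_condition_all_patches
    (n m : ℕ) (hn : 2 ≤ n) (hm : 1 ≤ m)
    (Q : Fin m → Matrix (Fin n) (Fin n) ℝ)
    (hQgen : ∀ α, IsGenerator (Q α)) (hQirr : ∀ α, StronglyConnected (Q α))
    (β δ : Fin n → ℝ) (hβ : ∀ i, 0 < β i) (hδ : ∀ i, 0 ≤ δ i)
    (vα : Fin m → Fin n → ℝ) (hvαpos : ∀ α i, 0 < vα α i)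
    (hvαnorm : ∀ α, ∑ i, vα α i = 1)
    (hvαeig : ∀ α i, ∑ j, Q α j i * vα α j = 0)
    (Npop : Fin m → ℝ) (hNpop : ∀ α, 0 < Npop α)
    (v : Idx n m → ℝ) (hv : ∀ k, v k = Npop k.1 * vα k.1 k.2)
    (hrates : ∀ i : Fin n, β i ≤ δ i) :
    muMax (Bmat n m β * Fmat v - Dmat n m δ - Lmat Q v) ≤ 0 :=
  sufficient_condition_all_patches_general n m Q hQgen β δ hβ vα hvαpos Npop hNpop v hv hrates
end
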